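/- arXiv:1408.3801 — 7 statements merged into one kernel-verified Lean document; each statement's English description precedes it below -/
import Mathlib

section
/- Let X be a Polish space, A ⊆ X a set, G a graph (irreflexive symmetric relation) on X, and suppose there is a Baire measurable function φ : 2^ℕ → X such that φ is meager-to-one (preimages of singletons are meager), the set φ⁻¹(A) is comeager in 2^ℕ, and the set (φ × φ)⁻¹(G) is meager in 2^ℕ × 2^ℕ. Then there is a continuous injection π : 2^ℕ → A whose image is G-independent (i.e., no two points of the image are G-related). -/
/-!
A Baire measurable map `φ` is continuous on a dense `Gδ` set `C`. On `C × C` the relation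
`φ x = φ y` is then relatively closed, and it cannot contain a relatively open box because the
fibres of `φ` are meagre; so it is nowhere dense, and
`R = {(x, y) ∈ (C ∩ φ⁻¹ A)² | φ x ≠ φ y ∧ ¬ G (φ x) (φ y)}` is comeagre.
Mycielski's theorem, proved for Cantor space by a fusion of cylinders that at stage `n` shrinks all
`2ⁿ` current cylinders so that every pair of distinct ones spans a box inside the `n`-th dense open
set, gives a continuous injection `f` with `(f x, f y) ∈ R` for `x ≠ y`; then `π = φ ∘ f`.
-/

open Set Function Filter TopologicalSpace PiNat

section BaireMeasurable

variable {Y X : Type*} [TopologicalSpace Y] [TopologicalSpace X]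

theorem prod_mem_residual {s : Set Y} {t : Set X} (hs : s ∈ residual Y) (ht : t ∈ residual X) :
    s ×ˢ t ∈ residual (Y × X) := by
  rw [Set.prod_eq]
  exact inter_mem (tendsto_residual_of_isOpenMap continuous_fst isOpenMap_fst hs)
    (tendsto_residual_of_isOpenMap continuous_snd isOpenMap_snd ht)

theorem exists_mem_residual_continuousOn [SecondCountableTopology X] {φ : Y → X}
    (hφ : ∀ U, IsOpen U → BaireMeasurableSet (φ ⁻¹' U)) :
    ∃ C ∈ residual Y, ContinuousOn φ C := by
  choose U hUo hU using fun V : countableBasis X =>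
    (hφ V (isOpen_of_mem_countableBasis V.2)).residualEq_isOpen
  have : Countable (countableBasis X) := (countable_countableBasis X).to_subtype
  refine ⟨{y | ∀ V : countableBasis X, (y ∈ φ ⁻¹' (V : Set X)) = (y ∈ U V)},
    eventually_countable_forall.2 hU, ?_⟩
  rw [continuousOn_iff_continuous_domRestrict]
  refine (isBasis_countableBasis X).continuous_iff.2 fun V hV => ?_
  convert (hUo ⟨V, hV⟩).preimage continuous_subtype_val using 1
  ext ⟨y, hy⟩
  exact (hy ⟨V, hV⟩).to_iff

theorem isMeagre_setOf_apply_eq_apply [BaireSpace Y] [T2Space X] {φ : Y → X} {C : Set Y}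
    (hC : C ∈ residual Y) (hφC : ContinuousOn φ C) (hφ : ∀ x, IsMeagre (φ ⁻¹' {x})) :
    IsMeagre {p : Y × Y | φ p.1 = φ p.2} := by
  have hCm : IsMeagre Cᶜ := by rwa [IsMeagre, compl_compl]
  set F := C ×ˢ C ∩ {p : Y × Y | φ p.1 = φ p.2}
  have hF : IsNowhereDense F := by
    refine eq_empty_of_forall_notMem fun p hp => ?_
    obtain ⟨U, V, hUo, hVo, hpU, hpV, hUV⟩ := isOpen_prod_iff.1 isOpen_interior p.1 p.2 hp
    have hconst : ∀ x ∈ U ∩ C, ∀ y ∈ V ∩ C, φ x = φ y := by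
      intro x hx y hy
      have hcont : ContinuousWithinAt (Prod.map φ φ) F (x, y) :=
        ((hφC.prodMap hφC) (x, y) ⟨hx.2, hy.2⟩).mono inter_subset_left
      exact isClosed_diagonal.closure_subset_iff.2 (image_subset_iff.2 fun q hq => hq.2)
        (hcont.mem_closure_image (interior_subset (hUV ⟨hx.1, hy.1⟩)))
    obtain ⟨x, hx⟩ := (dense_of_mem_residual hC).inter_open_nonempty U hUo ⟨p.1, hpU⟩
    refine not_isMeagre_of_isOpen hVo ⟨p.2, hpV⟩ (((hφ (φ x)).union hCm).mono fun y hy => ?_)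
    by_cases hyC : y ∈ C
    · exact Or.inl (hconst x hx y ⟨hy, hyC⟩).symm
    · exact Or.inr hyC
  have hCCm : IsMeagre (C ×ˢ C)ᶜ := by rw [IsMeagre, compl_compl]; exact prod_mem_residual hC hC
  refine (hF.isMeagre.union hCCm).mono fun p hp => ?_
  by_cases hpC : p ∈ C ×ˢ C
  · exact Or.inl ⟨hpC, hp⟩
  · exact Or.inr hpC

end BaireMeasurable

section Refinement

variable {X ι : Type*} [TopologicalSpace X] {W : Set (X × X)}

theorem exists_shrink_prod_subset [DecidableEq ι] (hWo : IsOpen W) (hWd : Dense W)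
    {V : ι → Set X} (hV : ∀ k, IsOpen (V k) ∧ (V k).Nonempty) {i j : ι} (hij : i ≠ j) :
    ∃ V' : ι → Set X, (∀ k, (IsOpen (V' k) ∧ (V' k).Nonempty) ∧ V' k ⊆ V k) ∧
      V' i ×ˢ V' j ⊆ W := by
  have hVij := (hV i).1.prod (hV j).1
  obtain ⟨q, hqW, hq⟩ := hWd.exists_mem_open hVij ((hV i).2.prod (hV j).2)
  obtain ⟨A, B, hAo, hBo, hqA, hqB, hAB⟩ := isOpen_prod_iff.1 (hWo.inter hVij) q.1 q.2 ⟨hqW, hq⟩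
  refine ⟨update (update V i (A ∩ V i)) j (B ∩ V j), fun k => ?_, ?_⟩
  · rcases eq_or_ne k j with rfl | hkj
    · simpa using ⟨hBo.inter (hV k).1, q.2, hqB, hq.2⟩
    rcases eq_or_ne k i with rfl | hki
    · simpa [hkj] using ⟨hAo.inter (hV k).1, q.1, hqA, hq.1⟩
    · simpa [hkj, hki] using hV k
  · simpa [hij] using (prod_mono inter_subset_left inter_subset_left).trans
      (hAB.trans inter_subset_left)

theorem exists_pairwise_prod_subset [Finite ι] (hWo : IsOpen W) (hWd : Dense W)
    {U : ι → Set X} (hU : ∀ k, IsOpen (U k) ∧ (U k).Nonempty) :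
    ∃ V : ι → Set X, (∀ k, (IsOpen (V k) ∧ (V k).Nonempty) ∧ V k ⊆ U k) ∧
      Pairwise fun i j => V i ×ˢ V j ⊆ W := by
  classical
  have := Fintype.ofFinite ι
  suffices ∀ P : Finset (ι × ι), ∃ V : ι → Set X,
      (∀ k, (IsOpen (V k) ∧ (V k).Nonempty) ∧ V k ⊆ U k) ∧
        ∀ p ∈ P, p.1 ≠ p.2 → V p.1 ×ˢ V p.2 ⊆ W by
    obtain ⟨V, hV, hVW⟩ := this Finset.univ
    exact ⟨V, hV, fun i j hij => hVW (i, j) (Finset.mem_univ _) hij⟩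
  intro P
  induction P using Finset.induction_on with
  | empty => exact ⟨U, fun k => ⟨hU k, subset_rfl⟩, by simp⟩
  | insert p P _ ih =>
    obtain ⟨V, hV, hVW⟩ := ih
    obtain ⟨V', hV', hV'p⟩ : ∃ V' : ι → Set X,
        (∀ k, (IsOpen (V' k) ∧ (V' k).Nonempty) ∧ V' k ⊆ V k) ∧
          (p.1 ≠ p.2 → V' p.1 ×ˢ V' p.2 ⊆ W) := by
      by_cases hp : p.1 = p.2
      · exact ⟨V, fun k => ⟨(hV k).1, subset_rfl⟩, fun h => (h hp).elim⟩
      · obtain ⟨V', hV', hV'W⟩ := exists_shrink_prod_subset hWo hWd (fun k => (hV k).1) hp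
        exact ⟨V', hV', fun _ => hV'W⟩
    refine ⟨V', fun k => ⟨(hV' k).1, (hV' k).2.trans (hV k).2⟩, fun q hq hq12 => ?_⟩
    rcases Finset.mem_insert.1 hq with rfl | hq
    · exact hV'p hq12
    · exact (prod_mono (hV' _).2 (hV' _).2).trans (hVW q hq hq12)

end Refinement

section Cylinders

variable {β : Type*}

theorem mem_cylinder_of_forall_succ_mem_cylinder {p : ℕ → ℕ → β} {L : ℕ → ℕ} (hL : StrictMono L)
    (hp : ∀ n, p (n + 1) ∈ cylinder (p n) (L n)) (n : ℕ) :
    (fun j => p (j + 1) j) ∈ cylinder (p n) (L n) := by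
  have hnest : ∀ {m k}, m ≤ k → p k ∈ cylinder (p m) (L m) := by
    intro m k hmk
    induction k, hmk using Nat.le_induction with
    | base => exact self_mem_cylinder _ _
    | succ k hmk ih => exact fun i hi => (hp k i (hi.trans_le (hL.monotone hmk))).trans (ih i hi)
  intro i hi
  exact (hnest (le_max_right n (i + 1)) i ((lt_add_one i).trans_le (hL.id_le (i + 1)))).symm.trans
    (hnest (le_max_left n (i + 1)) i hi)

variable [TopologicalSpace β] [DiscreteTopology β]

theorem exists_cylinder_subset {U : Set (ℕ → β)} (hU : IsOpen U) {x : ℕ → β} (hx : x ∈ U) :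
    ∃ n, cylinder x n ⊆ U := by
  obtain ⟨_, ⟨y, n, rfl⟩, hxy, hsub⟩ :=
    (isTopologicalBasis_cylinders _).exists_subset_of_mem_open hx hU
  exact ⟨n, (mem_cylinder_iff_eq.1 hxy).trans_subset hsub⟩

theorem exists_pairwise_cylinder_prod_subset {ι : Type*} [Finite ι]
    {W : Set ((ℕ → β) × (ℕ → β))} (hWo : IsOpen W) (hWd : Dense W) (c : ι → ℕ → β) (L : ℕ) :
    ∃ (c' : ι → ℕ → β) (L' : ℕ), L ≤ L' ∧ (∀ i, c' i ∈ cylinder (c i) L) ∧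
      Pairwise fun i j => cylinder (c' i) L' ×ˢ cylinder (c' j) L' ⊆ W := by
  obtain ⟨V, hV, hVW⟩ := exists_pairwise_prod_subset hWo hWd fun i =>
    ⟨isOpen_cylinder _ (c i) L, c i, self_mem_cylinder _ _⟩
  choose z hz using fun i => (hV i).1.2
  choose m hm using fun i => exists_cylinder_subset (hV i).1.1 (hz i)
  obtain ⟨M, hM⟩ := Finite.exists_le m
  have hsub : ∀ i, cylinder (z i) (max L M) ⊆ V i := fun i =>
    (cylinder_anti _ ((hM i).trans (le_max_right _ _))).trans (hm i)
  exact ⟨z, max L M, le_max_left _ _, fun i => (hV i).2 (hz i),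
    fun i j hij => (prod_mono (hsub i) (hsub j)).trans (hVW hij)⟩

end Cylinders

theorem exists_cylinder_split_refinement {W : Set ((ℕ → Bool) × (ℕ → Bool))} (hWo : IsOpen W)
    (hWd : Dense W) {n : ℕ} (b : (Fin n → Bool) → ℕ → Bool) (L : ℕ) :
    ∃ (b' : (Fin (n + 1) → Bool) → ℕ → Bool) (L' : ℕ), L < L' ∧
      (∀ s, b' s ∈ cylinder (b (Fin.init s)) L) ∧ (∀ s, b' s L = s (Fin.last n)) ∧
      Pairwise fun s t => cylinder (b' s) L' ×ˢ cylinder (b' t) L' ⊆ W := by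
  obtain ⟨b', L', hL', hb', hW⟩ := exists_pairwise_cylinder_prod_subset hWo hWd
    (fun s : Fin (n + 1) → Bool => update (b (Fin.init s)) L (s (Fin.last n))) (L + 1)
  refine ⟨b', L', hL', fun s i hi => ?_, fun s => ?_, hW⟩
  · rw [hb' s i (hi.trans (lt_add_one L)), update_of_ne hi.ne]
  · rw [hb' s L (lt_add_one L), update_self]

/-- Stage `n` assigns to each binary string `s` of length `n` the cylinder
`cylinder (b n s) (L n)`. -/
theorem exists_cylinder_fusion {W : ℕ → Set ((ℕ → Bool) × (ℕ → Bool))}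
    (hWo : ∀ n, IsOpen (W n)) (hWd : ∀ n, Dense (W n)) :
    ∃ (b : ∀ n, (Fin n → Bool) → ℕ → Bool) (L : ℕ → ℕ), StrictMono L ∧
      (∀ n s, b (n + 1) s ∈ cylinder (b n (Fin.init s)) (L n)) ∧
      (∀ n s, b (n + 1) s (L n) = s (Fin.last n)) ∧
      ∀ n, Pairwise fun s t =>
        cylinder (b (n + 1) s) (L (n + 1)) ×ˢ cylinder (b (n + 1) t) (L (n + 1)) ⊆ W n := by
  choose b' L' hL hb hbit hW using fun n (b : (Fin n → Bool) → ℕ → Bool) (L : ℕ) =>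
    exists_cylinder_split_refinement (hWo n) (hWd n) b L
  let stage (n : ℕ) : ((Fin n → Bool) → ℕ → Bool) × ℕ :=
    Nat.rec (motive := fun n => ((Fin n → Bool) → ℕ → Bool) × ℕ) (fun _ _ => false, 0)
      (fun n p => (b' n p.1 p.2, L' n p.1 p.2)) n
  exact ⟨fun n => (stage n).1, fun n => (stage n).2, strictMono_nat_of_lt_succ fun n => hL n _ _,
    fun n => hb n _ _, fun n => hbit n _ _, fun n => hW n _ _⟩

theorem exists_continuous_injective_pairwise_mem_iInter {W : ℕ → Set ((ℕ → Bool) × (ℕ → Bool))}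
    (hWa : Antitone W) (hWo : ∀ n, IsOpen (W n)) (hWd : ∀ n, Dense (W n)) :
    ∃ f : (ℕ → Bool) → ℕ → Bool, Continuous f ∧ Injective f ∧
      Pairwise fun x y => (f x, f y) ∈ ⋂ n, W n := by
  obtain ⟨b, L, hL, hb, hbit, hW⟩ := exists_cylinder_fusion hWo hWd
  let a (n : ℕ) (x : ℕ → Bool) : ℕ → Bool := b n fun i => x i
  let f (x : ℕ → Bool) (j : ℕ) : Bool := a (j + 1) x j
  have hf (x : ℕ → Bool) (n : ℕ) : f x ∈ cylinder (a n x) (L n) :=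
    mem_cylinder_of_forall_succ_mem_cylinder (p := fun n => a n x) hL (fun n => hb n _) n
  have hf_bit (x : ℕ → Bool) (n : ℕ) : f x (L n) = x n :=
    (hf x (n + 1) (L n) (hL (lt_add_one n))).trans (hbit n _)
  refine ⟨f, ?_, fun x y hxy => funext fun n => ?_, fun x y hxy => ?_⟩
  · exact continuous_pi fun j => (continuous_apply j).comp
      (continuous_of_discreteTopology.comp (by fun_prop))
  · rw [← hf_bit x, ← hf_bit y, hxy]
  · obtain ⟨k, hk⟩ := Function.ne_iff.1 hxy
    refine mem_iInter.2 fun n => hWa (le_max_left n k) (hW (max n k) (fun h => hk ?_)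
      ⟨hf x _, hf y _⟩)
    exact congrFun h ⟨k, Nat.lt_succ_of_le (le_max_right n k)⟩

theorem exists_continuous_injective_pairwise_mem {R : Set ((ℕ → Bool) × (ℕ → Bool))}
    (hR : R ∈ residual _) :
    ∃ f : (ℕ → Bool) → ℕ → Bool, Continuous f ∧ Injective f ∧
      Pairwise fun x y => (f x, f y) ∈ R := by
  obtain ⟨t, htR, htG, htd⟩ := mem_residual.1 hR
  obtain ⟨V, hVo, rfl⟩ := isGδ_iff_eq_iInter_nat.1 htG
  obtain ⟨f, hfc, hfi, hfW⟩ := exists_continuous_injective_pairwise_mem_iInter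
    (W := fun n => ⋂ m ∈ Iic n, V m) (fun n k h => biInter_subset_biInter_left (Iic_subset_Iic.2 h))
    (fun n => (finite_Iic n).isOpen_biInter fun m _ => hVo m)
    (fun n => htd.mono fun x hx => mem_iInter₂.2 fun m _ => mem_iInter.1 hx m)
  exact ⟨f, hfc, hfi, fun x y hxy =>
    htR (mem_iInter.2 fun n => mem_iInter₂.1 (mem_iInter.1 (hfW hxy) n) n self_mem_Iic)⟩

theorem statement0_general {X : Type*} [TopologicalSpace X] [PolishSpace X]
    (A : Set X) (G : X → X → Prop)
    (hGirr : ∀ x, ¬ G x x)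
    (φ : (ℕ → Bool) → X)
    (hφBaire : ∀ U : Set X, IsOpen U → BaireMeasurableSet (φ ⁻¹' U))
    (hφmeager : ∀ x : X, IsMeagre (φ ⁻¹' {x}))
    (hA : φ ⁻¹' A ∈ residual (ℕ → Bool))
    (hG : IsMeagre {p : (ℕ → Bool) × (ℕ → Bool) | G (φ p.1) (φ p.2)}) :
    ∃ π : (ℕ → Bool) → X, Continuous π ∧ Function.Injective π ∧
      Set.range π ⊆ A ∧ ∀ x y : ℕ → Bool, ¬ G (π x) (π y) := by
  obtain ⟨C, hC, hφC⟩ := exists_mem_residual_continuousOn hφBaire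
  have hbad : IsMeagre {p : (ℕ → Bool) × (ℕ → Bool) | φ p.1 = φ p.2 ∨ G (φ p.1) (φ p.2)} :=
    (isMeagre_setOf_apply_eq_apply hC hφC hφmeager).union hG
  obtain ⟨f, hfc, -, hfR⟩ := exists_continuous_injective_pairwise_mem
    (inter_mem (prod_mem_residual (inter_mem hC hA) (inter_mem hC hA)) hbad)
  have hfC (x : ℕ → Bool) : f x ∈ C ∩ φ ⁻¹' A :=
    have ⟨y, hy⟩ := exists_ne x
    (hfR hy.symm).1.1
  refine ⟨φ ∘ f, hφC.comp_continuous hfc fun x => (hfC x).1,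
    fun x y h => by_contra fun hxy => (hfR hxy).2 (Or.inl h), range_subset_iff.2 fun x => (hfC x).2,
    fun x y => ?_⟩
  rcases eq_or_ne x y with rfl | hxy
  · exact hGirr _
  · exact fun h => (hfR hxy).2 (Or.inr h)

/-- From a meager-to-one Baire measurable `φ : 2^ℕ → X` with comeager
`φ⁻¹(A)` and meager `(φ × φ)⁻¹(G)`, one obtains a continuous injection of Cantor
space into `A` with `G`-independent image. -/
theorem statement0 {X : Type*} [TopologicalSpace X] [PolishSpace X]
    (A : Set X) (G : X → X → Prop)
    (hGirr : ∀ x, ¬ G x x) (hGsym : ∀ x y, G x y → G y x)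
    (φ : (ℕ → Bool) → X)
    (hφBaire : ∀ U : Set X, IsOpen U → BaireMeasurableSet (φ ⁻¹' U))
    (hφmeager : ∀ x : X, IsMeagre (φ ⁻¹' {x}))
    (hA : φ ⁻¹' A ∈ residual (ℕ → Bool))
    (hG : IsMeagre {p : (ℕ → Bool) × (ℕ → Bool) | G (φ p.1) (φ p.2)}) :
    ∃ π : (ℕ → Bool) → X, Continuous π ∧ Function.Injective π ∧
      Set.range π ⊆ A ∧ ∀ x y : ℕ → Bool, ¬ G (π x) (π y) :=
  statement0_general A G hGirr φ hφBaire hφmeager hA hG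
end

section
/- For k ∈ ℕ, let F_k be the equivalence relation on (2^ℕ)^ℕ defined by x F_k y iff x(m) = y(m) for all m ≥ k. If B ⊆ (2^ℕ)^ℕ has the Baire property and F_{k+1} restricted to B has countable index over F_k restricted to B (i.e., every F_{k+1}-class of B meets only countably many F_k-classes of B), then B is meager. -/
/-!
Suppose `B` is not meagre. Split `(2^ℕ)^ℕ` as `2^ℕ × (2^ℕ)^{ℕ ∖ {k}}` by isolating coordinate `k`.
By the Kuratowski–Ulam theorem some vertical section `{a | (a, c) ∈ B}` is not meagre. All points
of `B` over a fixed `c` agree off coordinate `k`, so they lie in one `F_{k+1}`-class, and the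
`F_k`-class of such a point determines its `k`-th coordinate `a`. Countable index therefore makes
the section countable, hence meagre in the perfect space `2^ℕ`: a contradiction.
-/

open Set Filter Topology TopologicalSpace

instance Pi.perfectSpace {ι : Type*} [Infinite ι] {Y : ι → Type*} [∀ i, TopologicalSpace (Y i)]
    [∀ i, Nontrivial (Y i)] : PerfectSpace (∀ i, Y i) := by
  classical
  refine perfectSpace_iff_forall_not_isolated.2 fun x => ?_
  rw [← mem_closure_iff_nhdsWithin_neBot]
  choose y hy using fun i => exists_ne (x i)
  refine mem_closure_of_tendsto (b := cofinite) (f := fun i => Function.update x i (y i)) ?_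
    (Eventually.of_forall fun i hi => hy i (by simpa using congrFun hi i))
  refine tendsto_pi_nhds.2 fun j => tendsto_const_nhds.congr' ?_
  filter_upwards [eventually_cofinite_ne j] with i hi
  exact (Function.update_of_ne (Ne.symm hi) _ _).symm

theorem Set.Countable.isMeagre {X : Type*} [TopologicalSpace X] [T1Space X] [PerfectSpace X]
    {s : Set X} (hs : s.Countable) : IsMeagre s := by
  rw [← biUnion_of_singleton s]
  exact isMeagre_biUnion hs fun x _ =>
    (isClosed_isNowhereDense_iff_compl.2 ⟨isOpen_compl_singleton, dense_compl_singleton x⟩).2.isMeagre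

section KuratowskiUlam

variable {A C : Type*} [TopologicalSpace A] [TopologicalSpace C] [SecondCountableTopology A]

theorem IsOpen.eventually_residual_dense_preimage_prodMk_left {W : Set (A × C)} (hWo : IsOpen W)
    (hWd : Dense W) : ∀ᶠ c in residual C, Dense ((·, c) ⁻¹' W) := by
  obtain ⟨b, hbc, hbne, hb⟩ := exists_countable_basis A
  -- `c` lies in `Prod.snd '' (W ∩ V ×ˢ univ)` iff the section of `W` at `c` meets `V`.
  have hsnd : ∀ V ∈ b, Prod.snd '' (W ∩ V ×ˢ univ) ∈ residual C := by
    intro V hV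
    refine residual_of_dense_open (isOpenMap_snd _ (hWo.inter ((hb.isOpen hV).prod isOpen_univ)))
      (dense_iff_inter_open.2 fun O hO hOne => ?_)
    have hVne : V.Nonempty := nonempty_iff_ne_empty.2 fun h => hbne (h ▸ hV)
    obtain ⟨p, hpVO, hpW⟩ :=
      hWd.inter_open_nonempty _ ((hb.isOpen hV).prod hO) (hVne.prod hOne)
    exact ⟨p.2, hpVO.2, p, ⟨hpW, hpVO.1, trivial⟩, rfl⟩
  filter_upwards [(countable_bInter_mem hbc).2 hsnd] with c hc
  refine hb.dense_iff.2 fun V hV _ => ?_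
  obtain ⟨p, ⟨hpW, hpV, -⟩, rfl⟩ := mem_iInter₂.1 hc V hV
  exact ⟨p.1, hpV, hpW⟩

theorem IsMeagre.eventually_residual_isMeagre_preimage_prodMk_left {M : Set (A × C)}
    (hM : IsMeagre M) : ∀ᶠ c in residual C, IsMeagre ((·, c) ⁻¹' M) := by
  obtain ⟨S, hSo, hSd, hSc, hSM⟩ := mem_residual_iff.1 hM
  filter_upwards [(countable_bInter_mem hSc).2 fun W hW =>
    (hSo W hW).eventually_residual_dense_preimage_prodMk_left (hSd W hW)] with c hc
  refine mem_of_superset ((countable_bInter_mem hSc).2 fun W hW => residual_of_dense_open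
    ((hSo W hW).preimage (Continuous.prodMk_left c)) (mem_iInter₂.1 hc W hW)) ?_
  exact fun a ha => hSM (mem_sInter.2 fun W hW => mem_iInter₂.1 ha W hW)

theorem BaireMeasurableSet.exists_not_isMeagre_preimage_prodMk_left [BaireSpace A] [BaireSpace C]
    {B : Set (A × C)} (hB : BaireMeasurableSet B) (hB' : ¬IsMeagre B) :
    ∃ c, ¬IsMeagre ((·, c) ⁻¹' B) := by
  obtain ⟨U, hUo, hBU⟩ := hB.residualEq_isOpen
  obtain ⟨p, hpU⟩ : U.Nonempty :=
    nonempty_iff_ne_empty.2 fun hU => hB' (eventuallyEq_empty.1 (hU ▸ hBU))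
  have hUB : IsMeagre (U \ B) := by
    have h := (EventuallyEq.refl _ U).diff hBU
    rw [sdiff_self] at h
    exact eventuallyEq_empty.1 h
  obtain ⟨VA, VC, hVA, hVC, hpVA, hpVC, hVU⟩ := isOpen_prod_iff.1 hUo p.1 p.2 hpU
  obtain ⟨c, hcVC, hcUB⟩ := (dense_of_mem_residual
    hUB.eventually_residual_isMeagre_preimage_prodMk_left).inter_open_nonempty VC hVC ⟨p.2, hpVC⟩
  refine ⟨c, fun hBc => not_isMeagre_of_isOpen hVA ⟨p.1, hpVA⟩ ((hBc.union hcUB).mono fun a ha => ?_)⟩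
  by_cases haB : (a, c) ∈ B
  · exact Or.inl haB
  · exact Or.inr ⟨hVU (mk_mem_prod ha hcVC), haB⟩

end KuratowskiUlam

/-- If `B ⊆ (2^ℕ)^ℕ` has the Baire property and `F_{k+1}` has countable
index over `F_k` on `B`, then `B` is meager. Here `x F_k y ↔ ∀ m ≥ k, x m = y m`. -/
theorem statement1 (k : ℕ) (B : Set (ℕ → ℕ → Bool)) (hB : BaireMeasurableSet B)
    (h : ∀ x ∈ B, ∃ D : Set (ℕ → ℕ → Bool), D.Countable ∧
      ∀ y ∈ B, (∀ m ≥ k + 1, x m = y m) → ∃ d ∈ D, ∀ m ≥ k, y m = d m) :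
    IsMeagre B := by
  by_contra hB'
  let e := (Homeomorph.funSplitAt (ℕ → Bool) k).symm
  obtain ⟨c, hc⟩ := (hB.preimage e.continuous e.isOpenMap).exists_not_isMeagre_preimage_prodMk_left
    fun he => hB' (by simpa [preimage_preimage] using he.preimage_of_isOpenMap e.symm.continuous e.symm.isOpenMap)
  obtain ⟨a₀, ha₀⟩ := nonempty_of_not_isMeagre hc
  obtain ⟨D, hD, hDB⟩ := h (e (a₀, c)) ha₀
  refine hc ((hD.image (· k)).isMeagre.mono fun a ha => ?_)
  obtain ⟨d, hdD, hd⟩ := hDB (e (a, c)) ha fun m hm => by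
    simp [e, Homeomorph.funSplitAt, show m ≠ k by omega]
  exact ⟨d, hdD, by simpa [e, Homeomorph.funSplitAt] using (hd k le_rfl).symm⟩
end

section
/- Let X be a Baire topological space, Y a second countable T₀ topological space, E a generically ergodic equivalence relation on X (every E-invariant subset of X with the Baire property is meager or comeager), and φ : X → Y a Baire measurable function that is constant on E-classes. Then there exists y ∈ Y such that φ⁻¹({y}) is comeager in X. -/
open Set

/-- If `E` is a generically ergodic equivalence relation on a nonempty
Baire space `X`, `Y` is second countable and `T₀`, and `φ : X → Y` is a Baire
measurable homomorphism from `E` to equality, then some fiber of `φ` is comeager. -/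
theorem statement3 {X Y : Type*} [TopologicalSpace X] [BaireSpace X] [Nonempty X]
    [TopologicalSpace Y] [SecondCountableTopology Y] [T0Space Y]
    (E : X → X → Prop) (hE : Equivalence E)
    (hergodic : ∀ S : Set X, (∀ x y, E x y → (x ∈ S ↔ y ∈ S)) →
      BaireMeasurableSet S → IsMeagre S ∨ S ∈ residual X)
    (φ : X → Y) (hφ : ∀ U : Set Y, IsOpen U → BaireMeasurableSet (φ ⁻¹' U))
    (hhom : ∀ x y, E x y → φ x = φ y) :
    ∃ y : Y, φ ⁻¹' {y} ∈ residual X := by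
  classical
  set B := TopologicalSpace.countableBasis Y with hBdef
  have hBc : B.Countable := TopologicalSpace.countable_countableBasis Y
  have hBbasis := TopologicalSpace.isBasis_countableBasis Y
  have key : ∀ U ∈ B,
      (if φ ⁻¹' U ∈ residual X then φ ⁻¹' U else (φ ⁻¹' U)ᶜ) ∈ residual X := by
    intro U hU
    split_ifs with h
    · exact h
    · have hUo : IsOpen U := TopologicalSpace.isOpen_of_mem_countableBasis hU
      rcases hergodic (φ ⁻¹' U)
        (fun x y hxy => by rw [mem_preimage, mem_preimage, hhom x y hxy])
        (hφ U hUo) with hm | hc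
      · exact hm
      · exact absurd hc h
  have hR : (⋂ U ∈ B, (if φ ⁻¹' U ∈ residual X then φ ⁻¹' U else (φ ⁻¹' U)ᶜ))
      ∈ residual X := (countable_bInter_mem hBc).mpr key
  obtain ⟨x₀, hx₀⟩ := (dense_of_mem_residual hR).nonempty
  refine ⟨φ x₀, Filter.mem_of_superset hR ?_⟩
  intro x hx
  simp only [mem_iInter] at hx hx₀
  have hagree : ∀ V ∈ B, (φ x ∈ V ↔ φ x₀ ∈ V) := by
    intro V hV
    have h1 := hx V hV
    have h2 := hx₀ V hV
    split_ifs at h1 h2 with h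
    · exact ⟨fun _ => h2, fun _ => h1⟩
    · exact ⟨fun hc => absurd hc h1, fun hc => absurd hc h2⟩
  have hins : Inseparable (φ x) (φ x₀) := by
    rw [inseparable_iff_forall_isOpen]
    intro U hU
    constructor
    · intro hxU
      obtain ⟨V, hVB, hxV, hVU⟩ := hBbasis.exists_subset_of_mem_open hxU hU
      exact hVU ((hagree V hVB).mp hxV)
    · intro hxU
      obtain ⟨V, hVB, hxV, hVU⟩ := hBbasis.exists_subset_of_mem_open hxU hU
      exact hVU ((hagree V hVB).mpr hxV)
  exact hins.eq
end

section
/- There is no Baire measurable reduction of E_1 to an equivalence relation with all classes countable on a Polish space. That is, if Y is a Polish space, F is an equivalence relation on Y whose classes are all countable, and φ : (2^ℕ)^ℕ → Y is Baire measurable with x E_1 x' ⟺ φ(x) F φ(x'), then a contradiction follows. -/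
/-!
Suppose `φ` were such a reduction. Being Baire measurable, `φ` is continuous on a dense `Gδ`
set `C`. Changing only the first `k` columns of `x` does not change its `E₁`-class, so along each
such head slice `φ` takes countably many values; being continuous on `C`, it is locally constant
there off a meagre set. By Kuratowski–Ulam these exceptional sets are meagre in the whole space;
the converse direction of Kuratowski–Ulam needs their Baire property, which holds because they
are built from projections of `Gδ` sets, i.e. by the Souslin operation.
Fix a point `x₀` that is generic at every level. A fusion argument changes the columns
`0, 1, 2, …` of `x₀` one at a time without changing the value of `φ`; a cluster point `z` of the
construction lies in `C`, so `φ z = φ x₀`, yet `z` differs from `x₀` in every column.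
-/

open Set Filter Topology TopologicalSpace

section Baire

variable {X : Type*} [TopologicalSpace X]

lemma Filter.EventuallyEq.isMeagre_diff {s t : Set X} (h : s =ᵇ t) : IsMeagre (s \ t) :=
  mem_of_superset h.mem_iff fun _ hx hst => hst.2 (hx.1 hst.1)

lemma IsGδ.baireMeasurableSet {s : Set X} (hs : IsGδ s) : BaireMeasurableSet s := by
  obtain ⟨T, hT, hTc, rfl⟩ := hs
  exact .sInter hTc fun t ht => (hT t ht).baireMeasurableSet

lemma IsOpen.isNowhereDense_frontier {W : Set X} (hW : IsOpen W) :
    IsNowhereDense (frontier W) := by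
  rw [isClosed_frontier.isNowhereDense_iff, ← frontier_compl]
  exact interior_frontier hW.isClosed_compl

end Baire

theorem exists_isGδ_mem_residual_continuousOn {X Y : Type*} [TopologicalSpace X]
    [TopologicalSpace Y] [SecondCountableTopology Y] {f : X → Y}
    (hf : ∀ U, IsOpen U → BaireMeasurableSet (f ⁻¹' U)) :
    ∃ C, IsGδ C ∧ C ∈ residual X ∧ ContinuousOn f C := by
  choose V hVo hV using fun U : countableBasis Y =>
    (hf U (isOpen_of_mem_countableBasis U.2)).residualEq_isOpen
  have hres : ∀ᵇ x, ∀ U : countableBasis Y, (x ∈ f ⁻¹' U ↔ x ∈ V U) :=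
    eventually_countable_forall.mpr fun U => (hV U).mem_iff
  obtain ⟨S, hSo, hSd, hSc, hSsub⟩ := mem_residual_iff.mp hres
  refine ⟨⋂₀ S, ⟨S, hSo, hSc, rfl⟩,
    (countable_sInter_mem hSc).mpr fun t ht => residual_of_dense_open (hSo t ht) (hSd t ht),
    (isBasis_countableBasis Y).continuousOn_iff.mpr fun t ht => ⟨V ⟨t, ht⟩, hVo _, ?_⟩⟩
  ext x
  exact and_congr_left fun hx => hSsub hx ⟨t, ht⟩


section KuratowskiUlam

variable {A B : Type*} [TopologicalSpace A] [TopologicalSpace B] [SecondCountableTopology A]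

lemma IsNowhereDense.eventually_isNowhereDense_section {M : Set (A × B)}
    (hM : IsNowhereDense M) : ∀ᵇ b : B, IsNowhereDense {a | (a, b) ∈ M} := by
  set F := closure M
  have hdense : Dense Fᶜ := interior_eq_empty_iff_dense_compl.mp hM
  -- for each basic `V`, generically `V` is not contained in the section of `F`
  have hV : ∀ V ∈ countableBasis A, (⋃ a ∈ V, Prod.mk a ⁻¹' Fᶜ) ∈ residual B := by
    intro V hV
    refine residual_of_dense_open ?_ ?_
    · exact isOpen_biUnion fun a _ =>
        isClosed_closure.isOpen_compl.preimage (Continuous.prodMk_right a)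
    · refine dense_iff_inter_open.mpr fun W hW hWne => ?_
      have hVne : V.Nonempty :=
        nonempty_iff_ne_empty.mpr fun h => empty_notMem_countableBasis A (h ▸ hV)
      obtain ⟨p, ⟨hpV, hpW⟩, hpF⟩ := hdense.inter_open_nonempty _
        ((isOpen_of_mem_countableBasis hV).prod hW) (hVne.prod hWne)
      exact ⟨p.2, hpW, mem_biUnion hpV hpF⟩
  filter_upwards [(eventually_countable_ball (countable_countableBasis A)).mpr hV] with b hb
  refine IsNowhereDense.mono (s := {a | (a, b) ∈ F}) (fun a ha => subset_closure ha) ?_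
  refine (isClosed_closure.preimage (Continuous.prodMk_left b)).isNowhereDense_iff.mpr ?_
  refine eq_empty_iff_forall_notMem.mpr fun a ha => ?_
  obtain ⟨V, hV, haV, hVsub⟩ :=
    (isBasis_countableBasis A).exists_subset_of_mem_open ha isOpen_interior
  obtain ⟨a', ha'V, ha'F⟩ := mem_iUnion₂.mp (hb V hV)
  exact ha'F (interior_subset (s := {a | (a, b) ∈ F}) (hVsub ha'V))

lemma IsMeagre.eventually_isMeagre_section {M : Set (A × B)} (hM : IsMeagre M) :
    ∀ᵇ b : B, IsMeagre {a | (a, b) ∈ M} := by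
  obtain ⟨S, hS, hSc, hMS⟩ := isMeagre_iff_countable_union_isNowhereDense.mp hM
  filter_upwards [(eventually_countable_ball hSc).mpr fun N hN =>
    (hS N hN).eventually_isNowhereDense_section] with b hb
  refine (isMeagre_biUnion hSc fun N hN => (hb N hN).isMeagre).mono fun a ha => ?_
  simpa using hMS ha

lemma BaireMeasurableSet.isMeagre_of_eventually_isMeagre_section [BaireSpace A] [BaireSpace B]
    {S : Set (A × B)} (hS : BaireMeasurableSet S) (h : ∀ᵇ b : B, IsMeagre {a | (a, b) ∈ S}) :
    IsMeagre S := by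
  obtain ⟨W, hWo, hSW⟩ := hS.residualEq_isOpen
  suffices hW : W = ∅ by simpa [hW] using hSW.isMeagre_diff
  refine eq_empty_iff_forall_notMem.mpr fun w hw => ?_
  obtain ⟨V, V', hVo, hV'o, hwV, hwV', hbox⟩ := isOpen_prod_iff.mp hWo w.1 w.2 hw
  have hres := inter_mem hSW.symm.isMeagre_diff.eventually_isMeagre_section h
  obtain ⟨b, hbV', hbWS, hbS⟩ :=
    (dense_of_mem_residual hres).inter_open_nonempty V' hV'o ⟨w.2, hwV'⟩
  refine not_isMeagre_of_isOpen hVo ⟨w.1, hwV⟩ ((hbWS.union hbS).mono fun a ha => ?_)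
  by_cases haS : (a, b) ∈ S
  · exact Or.inr haS
  · exact Or.inl ⟨hbox ⟨ha, hbV'⟩, haS⟩

end KuratowskiUlam

section SouslinOperation

variable {Z : Type*}

/-- The Souslin operation, with finite sequences of naturals encoded as lists. -/
def souslin (K : List ℕ → Set Z) : Set Z :=
  ⋃ v : ℕ → ℕ, ⋂ r, K ((List.range r).map v)

lemma souslin_subset (K : List ℕ → Set Z) : souslin K ⊆ K [] :=
  iUnion_subset fun _ => iInter_subset_of_subset 0 subset_rfl

lemma souslin_subset_iUnion_cons (K : List ℕ → Set Z) :
    souslin K ⊆ ⋃ n, souslin fun s => K (n :: s) := by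
  refine iUnion_subset fun v x hx => mem_iUnion.mpr ⟨v 0, mem_iUnion.mpr ⟨fun i => v (i + 1), ?_⟩⟩
  refine mem_iInter.mpr fun r => ?_
  have := mem_iInter.mp hx (r + 1)
  rwa [List.range_succ_eq_map, List.map_cons, List.map_map] at this

lemma exists_seq_forall_map_range {P : List ℕ → Prop} (h0 : P [])
    (h : ∀ s, P s → ∃ n, P (s ++ [n])) :
    ∃ v : ℕ → ℕ, ∀ r, P ((List.range r).map v) := by
  choose! f hf using h
  let g : ℕ → List ℕ := fun r => Nat.rec [] (fun _ s => s ++ [f s]) r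
  have hg : ∀ r, P (g r) := fun r => Nat.rec h0 (fun r ih => hf _ ih) r
  refine ⟨fun r => f (g r), fun r => ?_⟩
  convert hg r
  induction r with
  | zero => rfl
  | succ r ih => rw [List.range_succ, List.map_append, ih]; rfl

end SouslinOperation

section BaireHull

variable {Z : Type*} [TopologicalSpace Z] [SecondCountableTopology Z]

lemma exists_baireMeasurableSet_hull (S : Set Z) :
    ∃ H, BaireMeasurableSet H ∧ S ⊆ H ∧
      ∀ B, BaireMeasurableSet B → S ⊆ B → IsMeagre (H \ B) := by
  set 𝒱 := {V ∈ countableBasis Z | IsMeagre (S ∩ V)}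
  have hSO : IsMeagre (S ∩ ⋃₀ 𝒱) := by
    rw [sUnion_eq_biUnion, inter_iUnion₂]
    exact isMeagre_biUnion ((countable_countableBasis Z).mono (sep_subset _ _)) fun V hV => hV.2
  have hO : IsOpen (⋃₀ 𝒱) := isOpen_sUnion fun V hV => isOpen_of_mem_countableBasis hV.1
  refine ⟨(⋃₀ 𝒱)ᶜ ∪ S, ?_, subset_union_right, fun B hB hSB => ?_⟩
  · rw [← union_sdiff_self, Set.sdiff_compl]
    exact hO.baireMeasurableSet.compl.union hSO.baireMeasurableSet
  obtain ⟨W, hWo, hBW⟩ := hB.residualEq_isOpen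
  -- a basic set disjoint from `W` meets `S` in a meagre set, so lies in `⋃₀ 𝒱`
  have hOc : (⋃₀ 𝒱)ᶜ ⊆ closure W := by
    intro x hxO
    by_contra hxW
    obtain ⟨V, hV, hxV, hVW⟩ := (isBasis_countableBasis Z).exists_subset_of_mem_open hxW
      isClosed_closure.isOpen_compl
    refine hxO (subset_sUnion_of_mem (mem_sep hV ?_) hxV)
    refine hBW.isMeagre_diff.mono fun y hy => ?_
    exact ⟨hSB hy.1, fun hyW => hVW hy.2 (subset_closure hyW)⟩
  refine ((hWo.isNowhereDense_frontier.isMeagre.union hBW.symm.isMeagre_diff).mono ?_)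
  rintro x ⟨hx | hx, hxB⟩
  · by_cases hxW : x ∈ W
    · exact Or.inr ⟨hxW, hxB⟩
    · exact Or.inl (hWo.frontier_eq ▸ ⟨hOc hx, hxW⟩)
  · exact absurd (hSB hx) hxB

theorem baireMeasurableSet_souslin {K : List ℕ → Set Z}
    (hK : ∀ s, BaireMeasurableSet (K s)) : BaireMeasurableSet (souslin K) := by
  set A : List ℕ → Set Z := fun s => souslin fun t => K (s ++ t)
  have hAK : ∀ s, A s ⊆ K s := fun s => by simpa using souslin_subset fun t => K (s ++ t)
  have hAsucc : ∀ s, A s ⊆ ⋃ n, A (s ++ [n]) := fun s => by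
    simpa [A] using souslin_subset_iUnion_cons fun t => K (s ++ t)
  choose H₀ hH₀ hAH₀ hH₀min using fun s => exists_baireMeasurableSet_hull (A s)
  set H : List ℕ → Set Z := fun s => H₀ s ∩ K s
  have hH : ∀ s, BaireMeasurableSet (H s) := fun s => (hH₀ s).inter (hK s)
  have hAH : ∀ s, A s ⊆ H s := fun s => subset_inter (hAH₀ s) (hAK s)
  set N := ⋃ s, H s \ ⋃ n, H (s ++ [n])
  have hN : IsMeagre N := isMeagre_iUnion fun s =>
    (hH₀min s _ (.iUnion fun n => hH _) ((hAsucc s).trans (iUnion_mono fun n => hAH _))).mono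
      (sdiff_subset_sdiff_left inter_subset_left)
  -- off `N`, a point of `H []` can be followed down an infinite branch of the hulls
  have hHN : H [] \ N ⊆ souslin K := by
    rintro x ⟨hx, hxN⟩
    obtain ⟨v, hv⟩ := exists_seq_forall_map_range (P := fun s => x ∈ H s) hx fun s hs => by
      by_contra! h
      exact hxN (mem_iUnion.mpr ⟨s, hs, by simpa using h⟩)
    exact mem_iUnion.mpr ⟨v, mem_iInter.mpr fun r => (hv r).2⟩
  have hsub : souslin K ⊆ H [] := by simpa [A] using hAH []
  rw [← sdiff_sdiff_cancel_left hsub]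
  refine (hH []).diff (hN.mono fun x hx => ?_).baireMeasurableSet
  exact by_contra fun h => hx.2 (hHN ⟨hx.1, h⟩)

end BaireHull

section Projection

variable {K Z : Type*} [TopologicalSpace K] [TopologicalSpace Z] [CompactSpace K]

lemma image_snd_iInter_of_antitone {C : ℕ → Set (K × Z)} (hC : ∀ n, IsClosed (C n))
    (hanti : Antitone C) : Prod.snd '' ⋂ n, C n = ⋂ n, Prod.snd '' C n := by
  refine (image_iInter_subset _ _).antisymm fun z hz => ?_
  have hfib : ∀ n, IsClosed {k | (k, z) ∈ C n} := fun n =>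
    (hC n).preimage (Continuous.prodMk_left z)
  obtain ⟨k, hk⟩ := IsCompact.nonempty_iInter_of_sequence_nonempty_isCompact_isClosed
    (fun n => {k | (k, z) ∈ C n})
    (fun n => fun k hk => hanti n.le_succ hk)
    (fun n => by obtain ⟨p, hp, rfl⟩ := mem_iInter.mp hz n; exact ⟨p.1, hp⟩)
    (hfib 0).isCompact hfib
  exact ⟨(k, z), mem_iInter.mpr fun n => mem_iInter.mp hk n, rfl⟩

lemma IsOpen.exists_eq_iUnion_isClosed {X : Type*} [TopologicalSpace X] [PerfectlyNormalSpace X]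
    {O : Set X} (hO : IsOpen O) : ∃ W : ℕ → Set X, (∀ i, IsClosed (W i)) ∧ O = ⋃ i, W i := by
  obtain ⟨G, hG, hOG⟩ := hO.isClosed_compl.isGδ.eq_iInter_nat
  refine ⟨fun i => (G i)ᶜ, fun i => (hG i).isClosed_compl, ?_⟩
  rw [← compl_iInter, ← hOG, compl_compl]

theorem baireMeasurableSet_image_snd_of_isGδ [PerfectlyNormalSpace (K × Z)]
    [SecondCountableTopology Z] {Q : Set (K × Z)} (hQ : IsGδ Q) :
    BaireMeasurableSet (Prod.snd '' Q) := by
  obtain ⟨O, hO, rfl⟩ := hQ.eq_iInter_nat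
  choose W hW hOW using fun n => (hO n).exists_eq_iUnion_isClosed
  -- `⋂ n, O n = ⋃ v, ⋂ n, W n (v n)`, and `Prod.snd` commutes with decreasing intersections
  set C : (ℕ → ℕ) → ℕ → Set (K × Z) := fun v r => {p | ∀ i < r, p ∈ W i (v i)}
  have hC : ∀ v r, IsClosed (C v r) := fun v r => by
    simp only [C, ofPred_forall]
    exact isClosed_biInter fun i _ => hW i _
  have hsouslin : Prod.snd '' ⋂ n, O n =
      souslin fun s => Prod.snd '' {p | ∀ i (h : i < s.length), p ∈ W i s[i]} := by
    simp only [souslin, List.length_map, List.length_range, List.getElem_map, List.getElem_range]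
    rw [← iUnion_congr fun v => image_snd_iInter_of_antitone (hC v)
      fun r r' hrr' p hp i hi => hp i (hi.trans_le hrr')]
    rw [← image_iUnion]
    congr 1
    ext p
    simp only [C, mem_iInter, mem_iUnion, mem_ofPred_eq, hOW]
    constructor
    · intro hp
      choose v hv using hp
      exact ⟨v, fun r i _ => hv i⟩
    · rintro ⟨v, hv⟩ n
      exact ⟨v n, hv (n + 1) n n.lt_succ_self⟩
  rw [hsouslin]
  refine baireMeasurableSet_souslin fun s => ?_
  refine (isClosedMap_snd_of_compactSpace _ ?_).isOpen_compl.baireMeasurableSet.of_compl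
  simp only [ofPred_forall]
  exact isClosed_iInter fun i => isClosed_iInter fun _ => hW i _

end Projection

section LocallyConstant

variable {K Z Y : Type*} [TopologicalSpace K] [TopologicalSpace Z] [TopologicalSpace Y]

lemma ContinuousOn.isMeagre_setOf_not_eventually_eq [T1Space Y] {f : K → Y} {S : Set K}
    (hf : ContinuousOn f S) (hc : (f '' S).Countable) :
    IsMeagre {s ∈ S | ¬ ∀ᶠ s' in 𝓝[S] s, f s' = f s} := by
  set D : Y → Set K := fun y => S ∩ f ⁻¹' {y}
  refine (isMeagre_biUnion hc fun y _ => (isClosed_frontier.isNowhereDense_iff.mpr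
    (interior_frontier (s := closure (D y)) isClosed_closure)).isMeagre).mono ?_
  rintro s ⟨hs, hbad⟩
  refine mem_biUnion (mem_image_of_mem f hs)
    ⟨subset_closure (subset_closure ⟨hs, rfl⟩), fun hint => hbad ?_⟩
  -- on `S`, near a point of `interior (closure (D y))`, continuity forces the value `y`
  filter_upwards [mem_nhdsWithin_of_mem_nhds (isOpen_interior.mem_nhds hint), self_mem_nhdsWithin]
    with s' hs' hs'S
  simpa using ((hf s' hs'S).mono inter_subset_left).mem_closure (t := {f s})
    (interior_subset hs') fun x hx => hx.2

lemma ContinuousOn.isGδ_inter_preimage {f : K → Y} {s : Set K} {t : Set Y} (hf : ContinuousOn f s)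
    (hs : IsGδ s) (ht : IsOpen t) : IsGδ (s ∩ f ⁻¹' t) := by
  obtain ⟨u, hu, hfu⟩ := continuousOn_iff'.mp hf t ht
  rw [inter_comm, hfu]
  exact hu.isGδ.inter hs

variable [SecondCountableTopology K] [PseudoMetrizableSpace K] [PseudoMetrizableSpace Z]
  [SecondCountableTopology Z]

lemma baireMeasurableSet_setOf_not_eventually_eq [CompactSpace K] [T2Space Y]
    {ψ : K × Z → Y} {𝒞 : Set (K × Z)} (h𝒞 : IsGδ 𝒞) (hψ : ContinuousOn ψ 𝒞) :
    BaireMeasurableSet {p ∈ 𝒞 | ¬ ∀ᶠ s in 𝓝[{s | (s, p.2) ∈ 𝒞}] p.1, ψ (s, p.2) = ψ p} := by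
  set Q : Set K → Set (K × (K × Z)) := fun V =>
    {q | q.1 ∈ V ∧ q.2 ∈ 𝒞 ∧ (q.1, q.2.2) ∈ 𝒞 ∧ ψ (q.1, q.2.2) ≠ ψ q.2}
  have hQ : ∀ V, IsOpen V → IsGδ (Q V) := fun V hV => by
    have h𝔾 : IsGδ {q : K × (K × Z) | q.1 ∈ V ∧ q.2 ∈ 𝒞 ∧ (q.1, q.2.2) ∈ 𝒞} :=
      (hV.preimage continuous_fst).isGδ.inter
        ((h𝒞.preimage continuous_snd).inter (h𝒞.preimage (by fun_prop)))
    have hψ₂ : ContinuousOn (fun q : K × (K × Z) => (ψ (q.1, q.2.2), ψ q.2))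
        {q | q.1 ∈ V ∧ q.2 ∈ 𝒞 ∧ (q.1, q.2.2) ∈ 𝒞} :=
      (hψ.comp (by fun_prop) fun q hq => hq.2.2).prodMk (hψ.comp (by fun_prop) fun q hq => hq.2.1)
    convert hψ₂.isGδ_inter_preimage h𝔾 (isOpen_ne_fun continuous_fst continuous_snd) using 1
    ext q
    simp [Q, and_assoc]
  have heq : {p ∈ 𝒞 | ¬ ∀ᶠ s in 𝓝[{s | (s, p.2) ∈ 𝒞}] p.1, ψ (s, p.2) = ψ p} =
      𝒞 ∩ ⋂ V ∈ countableBasis K, ({p | p.1 ∉ V} ∪ Prod.snd '' Q V) := by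
    ext p
    simp only [(nhdsWithin_hasBasis (isBasis_countableBasis K).nhds_hasBasis _).eventually_iff]
    simp only [mem_sep_iff, mem_inter_iff, mem_iInter, not_exists, not_and, and_imp]
    refine and_congr_right fun hp => forall₂_congr fun V _ => ?_
    simp [Q, hp, or_iff_not_imp_left]
  rw [heq]
  exact h𝒞.baireMeasurableSet.inter (.biInter (countable_countableBasis K) fun V hV =>
    ((isOpen_of_mem_countableBasis hV).preimage continuous_fst).baireMeasurableSet.compl.union
      (baireMeasurableSet_image_snd_of_isGδ (hQ V (isOpen_of_mem_countableBasis hV))))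

theorem isMeagre_setOf_not_eventually_eq [CompactSpace K] [BaireSpace K] [BaireSpace Z]
    [T2Space Y] {ψ : K × Z → Y} {𝒞 : Set (K × Z)} (h𝒞 : IsGδ 𝒞) (hψ : ContinuousOn ψ 𝒞)
    (hcount : ∀ t, (range fun s => ψ (s, t)).Countable) :
    IsMeagre {p ∈ 𝒞 | ¬ ∀ᶠ s in 𝓝[{s | (s, p.2) ∈ 𝒞}] p.1, ψ (s, p.2) = ψ p} :=
  (baireMeasurableSet_setOf_not_eventually_eq h𝒞 hψ).isMeagre_of_eventually_isMeagre_section <|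
    .of_forall fun t => (hψ.comp (Continuous.prodMk_left t).continuousOn fun _ hs => hs)
      |>.isMeagre_setOf_not_eventually_eq ((hcount t).mono (image_subset_range _ _))

end LocallyConstant

theorem IsMeagre.exists_saturated_superset {X ι : Type*} [TopologicalSpace X] [Countable ι]
    {H T : ι → Type*} [∀ i, TopologicalSpace (H i)] [∀ i, TopologicalSpace (T i)]
    [∀ i, SecondCountableTopology (H i)] (e : ∀ i, X ≃ₜ H i × T i) {B : Set X}
    (hB : IsMeagre B) :
    ∃ M, B ⊆ M ∧ IsMeagre M ∧ ∀ x ∉ M, ∀ i, IsMeagre {s | (e i).symm (s, (e i x).2) ∈ M} := by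
  let next : Set X → Set X := fun N =>
    N ∪ ⋃ i, e i ⁻¹' {p | ¬ IsMeagre {s | (e i).symm (s, p.2) ∈ N}}
  have hnext : ∀ N, IsMeagre N → IsMeagre (next N) := fun N hN => by
    refine hN.union <| isMeagre_iUnion fun i => ?_
    have hsec : IsMeagre {t | ¬ IsMeagre {s | (e i).symm (s, t) ∈ N}} := by
      rw [IsMeagre]
      filter_upwards [(hN.preimage_of_isOpenMap (e i).symm.continuous
        (e i).symm.isOpenMap).eventually_isMeagre_section] with t ht using not_not_intro ht
    exact (hsec.preimage_of_isOpenMap continuous_snd isOpenMap_snd).preimage_of_isOpenMap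
      (e i).continuous (e i).isOpenMap
  refine ⟨⋃ j, next^[j] B, subset_iUnion_of_subset 0 subset_rfl,
    isMeagre_iUnion fun j => ?_, fun x hx i => ?_⟩
  · induction j with
    | zero => exact hB
    | succ j ih => rw [Function.iterate_succ_apply']; exact hnext _ ih
  · simp only [mem_iUnion, not_exists] at hx
    simp only [mem_iUnion, ofPred_exists]
    refine isMeagre_iUnion fun j => ?_
    have hxj := hx (j + 1)
    rw [Function.iterate_succ_apply'] at hxj
    have := (not_or.mp hxj).2
    simp only [mem_iUnion, not_exists, mem_preimage, mem_ofPred_eq, not_not] at this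
    exact this i

theorem exists_seq_of_forall_mem_nhds_exists {X : Type*} [TopologicalSpace X] [CompactSpace X]
    [RegularSpace X] (P : ℕ → X → Prop) {O : ℕ → Set X} (hO : ∀ j, IsOpen (O j))
    (step : ∀ j x, P j x → ∀ U ∈ 𝓝 x, ∃ x' ∈ U ∩ O j, P (j + 1) x') {x₀ : X} (h₀ : P 0 x₀) :
    ∃ (y : ℕ → X) (z : X), (∀ j, P j (y j)) ∧ z ∈ closure (range y) ∧ ∀ j, z ∈ O j := by
  -- carry along closed neighbourhoods `N j` of `y j` with `N (j + 1) ⊆ N j ∩ O j`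
  have step' : ∀ j (c : X × Set X), P j c.1 ∧ c.2 ∈ 𝓝 c.1 ∧ IsClosed c.2 →
      ∃ c' : X × Set X, (P (j + 1) c'.1 ∧ c'.2 ∈ 𝓝 c'.1 ∧ IsClosed c'.2) ∧ c'.2 ⊆ c.2 ∩ O j := by
    rintro j ⟨x, N⟩ ⟨hx, hN, -⟩
    obtain ⟨x', ⟨hx'N, hx'O⟩, hx'⟩ := step j x hx _ (interior_mem_nhds.mpr hN)
    obtain ⟨N', hN', hN'c, hN'sub⟩ := exists_mem_nhds_isClosed_subset
      ((isOpen_interior.inter (hO j)).mem_nhds ⟨hx'N, hx'O⟩)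
    exact ⟨(x', N'), ⟨hx', hN', hN'c⟩, hN'sub.trans (inter_subset_inter_left _ interior_subset)⟩
  choose! next hnext hnextsub using step'
  let c : ℕ → X × Set X := fun j => Nat.rec (x₀, univ) next j
  have hc : ∀ j, P j (c j).1 ∧ (c j).2 ∈ 𝓝 (c j).1 ∧ IsClosed (c j).2 := fun j => by
    induction j with
    | zero => exact ⟨h₀, univ_mem, isClosed_univ⟩
    | succ j ih => exact hnext j (c j) ih
  have hanti : Antitone fun j => (c j).2 :=
    antitone_nat_of_succ_le fun j => (hnextsub j (c j) (hc j)).trans inter_subset_left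
  obtain ⟨z, hz⟩ := exists_clusterPt_of_compactSpace (map (fun j => (c j).1) atTop)
  have hzN : ∀ j, z ∈ (c j).2 := by
    intro j
    refine closure_minimal ?_ (hc j).2.2 (mapClusterPt_atTop_iff_forall_mem_closure.mp hz j)
    rintro _ ⟨i, hi, rfl⟩
    exact hanti hi (mem_of_mem_nhds (hc i).2.1)
  refine ⟨fun j => (c j).1, z, fun j => (hc j).1, ?_, fun j => ?_⟩
  · exact closure_mono (image_subset_range _ _) (mapClusterPt_atTop_iff_forall_mem_closure.mp hz 0)
  · exact (hnextsub j (c j) (hc j) (hzN (j + 1))).2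

section SplitAt

variable {α : Type*} [TopologicalSpace α]

def splitAt (k : ℕ) : (ℕ → α) ≃ₜ (Fin k → α) × (ℕ → α) where
  toFun x := (fun i => x i, fun n => x (n + k))
  invFun p n := if h : n < k then p.1 ⟨n, h⟩ else p.2 (n - k)
  left_inv x := by
    funext n
    by_cases h : n < k
    · simp [h]
    · simp [h, Nat.sub_add_cancel (not_lt.mp h)]
  right_inv p := by
    ext i
    · simp
    · simp
  continuous_toFun := by fun_prop
  continuous_invFun := continuous_pi fun n => by split_ifs <;> fun_prop

lemma splitAt_apply_snd (k : ℕ) (x : ℕ → α) (n : ℕ) : (splitAt k x).2 n = x (n + k) := rfl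

lemma splitAt_symm_apply_of_lt {k n : ℕ} (s : Fin k → α) (t : ℕ → α) (h : n < k) :
    (splitAt k).symm (s, t) n = s ⟨n, h⟩ := dif_pos h

lemma splitAt_symm_apply_of_le {k n : ℕ} (s : Fin k → α) (t : ℕ → α) (h : k ≤ n) :
    (splitAt k).symm (s, t) n = t (n - k) := dif_neg h.not_gt

lemma splitAt_succ_snd_eq {k : ℕ} {x y : ℕ → α} (h : (splitAt k x).2 = (splitAt k y).2) :
    (splitAt (k + 1) x).2 = (splitAt (k + 1) y).2 :=
  funext fun n => by
    simpa [splitAt_apply_snd, Nat.add_right_comm, ← add_assoc] using congrFun h (n + 1)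

end SplitAt

lemma dense_setOf_apply_ne {ι : Type*} (i : ι) (c : ℕ → Bool) :
    Dense {s : ι → ℕ → Bool | s i ≠ c} := by
  refine Dense.preimage (s := {c}ᶜ) ?_ (isOpenMap_eval (X := fun _ : ι => ℕ → Bool) i)
  -- flipping `c` at larger and larger places approximates `c` from outside `{c}`
  have hc : c ∈ closure {c}ᶜ := by
    refine mem_closure_of_tendsto (f := fun n => Function.update c n (!c n)) (b := atTop)
      (tendsto_pi_nhds.mpr fun m => tendsto_const_nhds.congr' ?_) (.of_forall fun n h => ?_)
    · filter_upwards [eventually_gt_atTop m] with n hn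
      exact (Function.update_of_ne hn.ne _ _).symm
    · simpa using congrFun h n
  refine dense_iff_closure_eq.mpr (eq_univ_of_forall fun f => ?_)
  by_cases hf : f = c
  · exact hf ▸ hc
  · exact subset_closure hf

section HeadLocallyConstant

variable {α Y : Type*} [TopologicalSpace α] [TopologicalSpace Y]

/-- On `C`, `φ` is constant near `x` when only the first `k` columns of `x` move. -/
def IsLocallyConstantInHead (φ : (ℕ → α) → Y) (C : Set (ℕ → α)) (k : ℕ) (x : ℕ → α) : Prop :=
  ∀ᶠ s in 𝓝[{s | (splitAt k).symm (s, (splitAt k x).2) ∈ C}] (splitAt k x).1,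
    φ ((splitAt k).symm (s, (splitAt k x).2)) = φ x

lemma isMeagre_setOf_not_isLocallyConstantInHead [CompactSpace α] [MetrizableSpace α]
    [SecondCountableTopology α] [T2Space Y] {φ : (ℕ → α) → Y} {C : Set (ℕ → α)} (hC : IsGδ C)
    (hφ : ContinuousOn φ C) (k : ℕ)
    (hcount : ∀ t, (range fun s => φ ((splitAt k).symm (s, t))).Countable) :
    IsMeagre {x ∈ C | ¬ IsLocallyConstantInHead φ C k x} := by
  have := (isMeagre_setOf_not_eventually_eq (hC.preimage (splitAt k).symm.continuous)
    (hφ.comp (splitAt k).symm.continuous.continuousOn fun _ h => h) hcount).preimage_of_isOpenMap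
      (splitAt k).continuous (splitAt k).isOpenMap
  convert this using 1
  ext x
  simp [IsLocallyConstantInHead]

end HeadLocallyConstant

section E1

variable {Y : Type*} {φ : (ℕ → ℕ → Bool) → Y} {C M : Set (ℕ → ℕ → Bool)}

lemma exists_mem_apply_ne_map_eq_of_notMem
    (hCM : Cᶜ ∪ ⋃ k, {x ∈ C | ¬ IsLocallyConstantInHead φ C k x} ⊆ M)
    (hMsat : ∀ x ∉ M, ∀ k, IsMeagre {s | (splitAt k).symm (s, (splitAt k x).2) ∈ M})
    {y : ℕ → ℕ → Bool} (hy : y ∉ M) (j : ℕ) (c : ℕ → Bool) {U : Set (ℕ → ℕ → Bool)}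
    (hU : U ∈ 𝓝 y) :
    ∃ y' ∈ U, y' ∈ C ∧ y' j ≠ c ∧ y' ∉ M ∧
      (splitAt (j + 1) y').2 = (splitAt (j + 1) y).2 ∧ φ y' = φ y := by
  have hC : ∀ x ∉ M, x ∈ C := fun x hx => by_contra fun h => hx (hCM (Or.inl h))
  set t := (splitAt (j + 1) y).2
  set g : (Fin (j + 1) → ℕ → Bool) → ℕ → ℕ → Bool := fun s => (splitAt (j + 1)).symm (s, t)
  have hg : Continuous g := by fun_prop
  have hconst : IsLocallyConstantInHead φ C (j + 1) y :=
    by_contra fun h => hy (hCM (Or.inr (mem_iUnion.mpr ⟨j + 1, hC y hy, h⟩)))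
  have hgU : g ⁻¹' U ∈ 𝓝 (splitAt (j + 1) y).1 :=
    hg.continuousAt.preimage_mem_nhds (by simpa [g, t] using hU)
  obtain ⟨W, hWsub, hWo, hyW⟩ :=
    mem_nhds_iff.mp (inter_mem hgU (eventually_nhdsWithin_iff.mp hconst))
  have hres : {s | s ⟨j, j.lt_succ_self⟩ ≠ c} ∩ {s | g s ∈ M}ᶜ ∈ residual _ :=
    inter_mem (residual_of_dense_open (isOpen_ne_fun (continuous_apply _) continuous_const)
      (dense_setOf_apply_ne _ c)) (hMsat y hy (j + 1))
  obtain ⟨s, hsW, hsc, hsM⟩ := (dense_of_mem_residual hres).inter_open_nonempty W hWo ⟨_, hyW⟩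
  refine ⟨g s, (hWsub hsW).1, hC _ hsM, ?_, hsM, by simp [g, t], (hWsub hsW).2 (hC _ hsM)⟩
  rwa [show g s j = s ⟨j, j.lt_succ_self⟩ from splitAt_symm_apply_of_lt _ _ _]

theorem exists_forall_apply_ne_map_eq_of_notMem [TopologicalSpace Y] [T1Space Y] (hC : IsGδ C)
    (hφ : ContinuousOn φ C) (hCM : Cᶜ ∪ ⋃ k, {x ∈ C | ¬ IsLocallyConstantInHead φ C k x} ⊆ M)
    (hMsat : ∀ x ∉ M, ∀ k, IsMeagre {s | (splitAt k).symm (s, (splitAt k x).2) ∈ M})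
    {x₀ : ℕ → ℕ → Bool} (hx₀ : x₀ ∉ M) : ∃ z, φ z = φ x₀ ∧ ∀ j, z j ≠ x₀ j := by
  obtain ⟨U, hUo, rfl⟩ := hC.eq_iInter_nat
  obtain ⟨y, z, hy, hzy, hz⟩ := exists_seq_of_forall_mem_nhds_exists
    (fun j y => y ∉ M ∧ (splitAt j y).2 = (splitAt j x₀).2 ∧ φ y = φ x₀)
    (O := fun j => U j ∩ {w | w j ≠ x₀ j})
    (fun j => (hUo j).inter (isOpen_ne_fun (continuous_apply j) continuous_const))
    (fun j y ⟨hyM, hyx₀, hφy⟩ V hV => by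
      obtain ⟨y', hy'V, hy'C, hne, hy'M, hy'y, hφy'⟩ :=
        exists_mem_apply_ne_map_eq_of_notMem hCM hMsat hyM j (x₀ j) hV
      exact ⟨y', ⟨hy'V, mem_iInter.mp hy'C j, hne⟩, hy'M,
        hy'y.trans (splitAt_succ_snd_eq hyx₀), hφy'.trans hφy⟩)
    ⟨hx₀, rfl, rfl⟩
  have hyC : range y ⊆ ⋂ n, U n :=
    range_subset_iff.mpr fun j => by_contra fun h => (hy j).1 (hCM (Or.inl h))
  refine ⟨z, ?_, fun j => (hz j).2⟩
  simpa using ((hφ z (mem_iInter.mpr fun j => (hz j).1)).mono hyC).mem_closure (t := {φ x₀}) hzy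
    (forall_mem_range.mpr fun j => (hy j).2.2)

end E1

theorem statement5_general {Y : Type*} [TopologicalSpace Y] [PolishSpace Y]
    (F : Y → Y → Prop)
    (hFcount : ∀ y : Y, {z : Y | F y z}.Countable)
    (φ : (ℕ → ℕ → Bool) → Y)
    (hφ : ∀ U : Set Y, IsOpen U → BaireMeasurableSet (φ ⁻¹' U))
    (hred : ∀ x x' : ℕ → ℕ → Bool,
      (∃ n, ∀ m ≥ n, x m = x' m) ↔ F (φ x) (φ x')) :
    False := by
  obtain ⟨C, hCδ, hCres, hφC⟩ := exists_isGδ_mem_residual_continuousOn hφ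
  have hcount : ∀ k t, (range fun s => φ ((splitAt k).symm (s, t))).Countable := fun k t =>
    (hFcount _).mono <| range_subset_iff.mpr fun s => (hred ((splitAt k).symm (default, t)) _).mp
      ⟨k, fun m hm => by rw [splitAt_symm_apply_of_le _ _ hm, splitAt_symm_apply_of_le _ _ hm]⟩
  have hCc : IsMeagre Cᶜ := by rwa [IsMeagre, compl_compl]
  have hB : IsMeagre (Cᶜ ∪ ⋃ k, {x ∈ C | ¬ IsLocallyConstantInHead φ C k x}) :=
    hCc.union <| isMeagre_iUnion fun k =>
      isMeagre_setOf_not_isLocallyConstantInHead hCδ hφC k (hcount k)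
  obtain ⟨M, hBM, hM, hMsat⟩ := hB.exists_saturated_superset fun k => splitAt (α := ℕ → Bool) k
  obtain ⟨x₀, hx₀⟩ := (dense_of_mem_residual hM).nonempty
  obtain ⟨z, hφz, hz⟩ := exists_forall_apply_ne_map_eq_of_notMem hCδ hφC hBM hMsat hx₀
  obtain ⟨n, hn⟩ := (hred z x₀).mpr (hφz ▸ (hred x₀ x₀).mp ⟨0, fun _ _ => rfl⟩)
  exact hz n (hn n le_rfl)

/-- There is no Baire measurable reduction of `E₁` to an equivalence
relation with countable classes on a Polish space. -/
theorem statement5 {Y : Type*} [TopologicalSpace Y] [PolishSpace Y]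
    (F : Y → Y → Prop) (hF : Equivalence F)
    (hFcount : ∀ y : Y, {z : Y | F y z}.Countable)
    (φ : (ℕ → ℕ → Bool) → Y)
    (hφ : ∀ U : Set Y, IsOpen U → BaireMeasurableSet (φ ⁻¹' U))
    (hred : ∀ x x' : ℕ → ℕ → Bool,
      (∃ n, ∀ m ≥ n, x m = x' m) ↔ F (φ x) (φ x')) :
    False :=
  statement5_general F hFcount φ hφ hred
end

section
/- Fix k ∈ ℕ. Let E_1 and F_k be the equivalence relations on X = (2^ℕ)^ℕ defined by: x E_1 y iff x(m) = y(m) for all sufficiently large m, and x F_k y iff x(m) = y(m) for all m ≥ k. If R ⊆ X × X is an F_σ set disjoint from E_1 \ F_k, then R is disjoint from the intersection of countably many open subsets of X × X each of which is dense in the following sense: every open set U ⊆ X × X containing E_1 \ F_k has the property that for every pair of finite partial configurations s, t (specifying finitely many coordinates of finitely many columns) that disagree somewhere outside the first k columns, there exist finite extensions s', t' with [s'] × [t'] ⊆ U, where the new disagreements of s' and t' occur only in columns ≤ k or within the originally specified region. -/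
open Set

/-- The basic set of all `x ∈ (2^ℕ)^ℕ` extending the finite partial configuration
`s : Fin n → Fin m → Bool` (first `m` bits of the first `n` columns). -/
def ExtSet {m n : ℕ} (s : Fin n → Fin m → Bool) : Set (ℕ → ℕ → Bool) :=
  {x | ∀ (j : Fin n) (i : Fin m), x j i = s j i}

/-- `U ⊆ (2^ℕ)^ℕ × (2^ℕ)^ℕ` is `k`-dense: for all finite configurations `s, t` that
disagree at some coordinate in a column with index `≥ k`, there are finite extensions
`s', t'` with `[s'] × [t'] ⊆ U`, whose new disagreements in columns `> k` occur only
within the originally specified region. -/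
def kDense (k : ℕ) (U : Set ((ℕ → ℕ → Bool) × (ℕ → ℕ → Bool))) : Prop :=
  ∀ (m n : ℕ) (s t : Fin n → Fin m → Bool),
    (∃ (j : Fin n) (i : Fin m), k ≤ (j : ℕ) ∧ s j i ≠ t j i) →
    ∃ (m' n' : ℕ) (hm : m ≤ m') (hn : n ≤ n') (s' t' : Fin n' → Fin m' → Bool),
      (∀ (j : Fin n) (i : Fin m), s' (Fin.castLE hn j) (Fin.castLE hm i) = s j i) ∧
      (∀ (j : Fin n) (i : Fin m), t' (Fin.castLE hn j) (Fin.castLE hm i) = t j i) ∧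
      (ExtSet s' ×ˢ ExtSet t' ⊆ U) ∧
      ∀ (j : Fin n') (i : Fin m'), k < (j : ℕ) → s' j i ≠ t' j i →
        ((i : ℕ) < m ∧ (j : ℕ) < n)

lemma cyl_one (x : ℕ → Bool) {S : Set (ℕ → Bool)} (hS : S ∈ nhds x) :
    ∃ N, {z : ℕ → Bool | ∀ i < N, z i = x i} ⊆ S := by
  rw [nhds_pi, Filter.mem_pi'] at hS
  obtain ⟨I, t, ht, hsub⟩ := hS
  refine ⟨I.sup id + 1, fun z hz => hsub ?_⟩
  intro i hi
  have : z i = x i := hz i (Nat.lt_succ_of_le (Finset.le_sup (f := id) hi))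
  rw [this]
  exact mem_of_mem_nhds (ht i)

lemma cyl_two (x : ℕ → ℕ → Bool) {S : Set (ℕ → ℕ → Bool)} (hS : S ∈ nhds x) :
    ∃ N, {z : ℕ → ℕ → Bool | ∀ j < N, ∀ i < N, z j i = x j i} ⊆ S := by
  rw [nhds_pi, Filter.mem_pi'] at hS
  obtain ⟨I, t, ht, hsub⟩ := hS
  choose N hN using fun j => cyl_one (x j) (ht j)
  refine ⟨max (I.sup id + 1) (I.sup N), fun z hz => hsub ?_⟩
  intro j hj
  apply hN j
  intro i hi
  exact hz j (lt_of_lt_of_le (Nat.lt_succ_of_le (Finset.le_sup (f := id) hj))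
      (le_max_left _ _))
    i (lt_of_lt_of_le hi (le_trans (Finset.le_sup (f := N) hj) (le_max_right _ _)))

lemma open_kDense (k : ℕ) {U : Set ((ℕ → ℕ → Bool) × (ℕ → ℕ → Bool))}
    (hU : IsOpen U)
    (hsub : ∀ p : (ℕ → ℕ → Bool) × (ℕ → ℕ → Bool),
      (∃ n, ∀ m ≥ n, p.1 m = p.2 m) → ¬ (∀ m ≥ k, p.1 m = p.2 m) → p ∈ U) :
    kDense k U := by
  intro m n s t ⟨j₀, i₀, hk, hne⟩
  set x : ℕ → ℕ → Bool := fun j i =>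
    if h : j < n ∧ i < m then s ⟨j, h.1⟩ ⟨i, h.2⟩ else false with hx
  set y : ℕ → ℕ → Bool := fun j i =>
    if h : j < n ∧ i < m then t ⟨j, h.1⟩ ⟨i, h.2⟩ else false with hy
  have hxyU : (x, y) ∈ U := by
    apply hsub
    · exact ⟨n, fun j hj => funext fun i => by
        simp only [hx, hy]
        rw [dif_neg, dif_neg] <;> exact fun h => absurd hj (not_le.mpr h.1)⟩
    · intro hall
      have := congrFun (hall j₀ hk) i₀
      simp only [hx, hy, dif_pos (And.intro j₀.isLt i₀.isLt)] at this
      exact hne this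
  have hnhds : U ∈ nhds (x, y) := hU.mem_nhds hxyU
  rw [mem_nhds_prod_iff] at hnhds
  obtain ⟨A, hA, B, hB, hAB⟩ := hnhds
  obtain ⟨N₁, hN₁⟩ := cyl_two x hA
  obtain ⟨N₂, hN₂⟩ := cyl_two y hB
  set N := max N₁ N₂
  refine ⟨max m N, max n N, le_max_left _ _, le_max_left _ _,
    fun j i => x j i, fun j i => y j i, ?_, ?_, ?_, ?_⟩
  · intro j i
    simp only [hx, Fin.coe_castLE]
    rw [dif_pos ⟨j.isLt, i.isLt⟩]
  · intro j i
    simp only [hy, Fin.coe_castLE]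
    rw [dif_pos ⟨j.isLt, i.isLt⟩]
  · rintro ⟨z, w⟩ ⟨hz, hw⟩
    apply hAB
    constructor
    · apply hN₁
      intro j hj i hi
      exact hz ⟨j, lt_of_lt_of_le (lt_of_lt_of_le hj (le_max_left _ _)) (le_max_right _ _)⟩
        ⟨i, lt_of_lt_of_le (lt_of_lt_of_le hi (le_max_left _ _)) (le_max_right _ _)⟩
    · apply hN₂
      intro j hj i hi
      exact hw ⟨j, lt_of_lt_of_le (lt_of_lt_of_le hj (le_max_right _ _)) (le_max_right _ _)⟩
        ⟨i, lt_of_lt_of_le (lt_of_lt_of_le hi (le_max_right _ _)) (le_max_right _ _)⟩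
  · intro j i _ hne'
    by_contra hcon
    apply hne'
    simp only [hx, hy]
    rw [dif_neg, dif_neg] <;>
      · intro h
        exact hcon ⟨h.2, h.1⟩

/-- Every `F_σ` set `R` disjoint from `E₁ \ F_k` is `k`-meager, i.e.,
disjoint from the intersection of countably many `k`-dense open sets. -/
theorem statement6 (k : ℕ) (R : Set ((ℕ → ℕ → Bool) × (ℕ → ℕ → Bool)))
    (hR : ∃ F : ℕ → Set ((ℕ → ℕ → Bool) × (ℕ → ℕ → Bool)),
      (∀ i, IsClosed (F i)) ∧ R = ⋃ i, F i)
    (hdisj : ∀ p, p ∈ R →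
      ¬ ((∃ n, ∀ m ≥ n, p.1 m = p.2 m) ∧ ¬ (∀ m ≥ k, p.1 m = p.2 m))) :
    ∃ U : ℕ → Set ((ℕ → ℕ → Bool) × (ℕ → ℕ → Bool)),
      (∀ i, IsOpen (U i) ∧ kDense k (U i)) ∧ R ∩ (⋂ i, U i) = ∅ := by
  obtain ⟨F, hFclosed, hFR⟩ := hR
  refine ⟨fun i => (F i)ᶜ, fun i => ⟨(hFclosed i).isOpen_compl, ?_⟩, ?_⟩
  · apply open_kDense k (hFclosed i).isOpen_compl
    intro p h1 h2 hpF
    exact hdisj p (hFR ▸ Set.mem_iUnion.mpr ⟨i, hpF⟩) ⟨h1, h2⟩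
  · ext p
    simp only [Set.mem_inter_iff, Set.mem_iInter, Set.mem_compl_iff, Set.mem_empty_iff_false,
      iff_false, not_and]
    intro hpR hall
    rw [hFR] at hpR
    obtain ⟨i, hi⟩ := Set.mem_iUnion.mp hpR
    exact hall i hi
end

section
/- Let X be a Polish space, T : X → X a Borel function, and let P ⊆ X be the eventually periodic part of T, i.e., the set of x for which there exist natural numbers m < n with T^m(x) = T^n(x). Then there is a Borel set S ⊆ P meeting each class of the tail equivalence relation E_t(T) restricted to P in exactly one point. -/
open Set

private lemma iter_mul_fixed {X : Type*} (T : X → X) {p : X} {q : ℕ}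
    (hp : T^[q] p = p) (k : ℕ) : T^[k * q] p = p := by
  rw [Nat.mul_comm, Function.iterate_mul]
  exact Function.iterate_fixed hp k

private lemma iter_mod {X : Type*} (T : X → X) {p : X} {q : ℕ}
    (hp : T^[q] p = p) (k : ℕ) : T^[k] p = T^[k % q] p := by
  conv_lhs => rw [← Nat.mod_add_div k q, Function.iterate_add_apply, Nat.mul_comm,
    iter_mul_fixed T hp]

/-- if u is in the orbit of a periodic point p, then p is in the orbit of u -/
private lemma orbit_back {X : Type*} (T : X → X) {p : X} {q : ℕ} (hq : 0 < q)
    (hp : T^[q] p = p) (k : ℕ) : ∃ j, T^[j] (T^[k] p) = p := by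
  refine ⟨k * (q - 1), ?_⟩
  rw [← Function.iterate_add_apply]
  have : k * (q - 1) + k = k * q := by
    cases q with
    | zero => omega
    | succ q' => simp [Nat.mul_succ]
  rw [this, iter_mul_fixed T hp]

/-- For a Borel `T : X → X`, the restriction of tail equivalence to the
eventually periodic part of `T` admits a Borel transversal. -/
theorem statement8 {X : Type*} [TopologicalSpace X] [PolishSpace X]
    [MeasurableSpace X] [BorelSpace X]
    (T : X → X) (hT : Measurable T) :
    ∃ S : Set X, MeasurableSet S ∧
      S ⊆ {x | ∃ m n : ℕ, m < n ∧ T^[m] x = T^[n] x} ∧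
      ∀ x ∈ {x | ∃ m n : ℕ, m < n ∧ T^[m] x = T^[n] x},
        ∃! y, y ∈ S ∧ ∃ m n : ℕ, T^[m] x = T^[n] y := by
  obtain ⟨f, hf⟩ := MeasureTheory.exists_measurableEmbedding_real X
  set S : Set X :=
    (⋃ n, ⋃ _ : 0 < n, {x | f (T^[n] x) = f x}) ∩ ⋂ k, {x | f x ≤ f (T^[k] x)} with hSdef
  have hmem : ∀ x, x ∈ S ↔
      ((∃ n, 0 < n ∧ T^[n] x = x) ∧ ∀ k, f x ≤ f (T^[k] x)) := by
    intro x
    simp only [hSdef, mem_inter_iff, mem_iUnion, mem_setOf_eq, mem_iInter]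
    constructor
    · rintro ⟨⟨n, hn, he⟩, h2⟩; exact ⟨⟨n, hn, hf.injective he⟩, h2⟩
    · rintro ⟨⟨n, hn, he⟩, h2⟩; exact ⟨⟨n, hn, by rw [he]⟩, h2⟩
  refine ⟨S, ?_, ?_, ?_⟩
  · apply MeasurableSet.inter
    · exact MeasurableSet.iUnion fun n => MeasurableSet.iUnion fun _ =>
        measurableSet_eq_fun (hf.measurable.comp (hT.iterate n)) hf.measurable
    · exact MeasurableSet.iInter fun k =>
        measurableSet_le hf.measurable (hf.measurable.comp (hT.iterate k))
  · intro x hx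
    rw [hmem] at hx
    obtain ⟨⟨n, hn, he⟩, -⟩ := hx
    exact ⟨0, n, hn, by simpa using he.symm⟩
  · intro x hx
    obtain ⟨m, n, hmn, he⟩ := hx
    set p := T^[m] x with hpdef
    set q := n - m with hqdef
    have hq : 0 < q := by omega
    have hp : T^[q] p = p := by
      rw [hpdef, ← Function.iterate_add_apply, hqdef]
      have : n - m + m = n := by omega
      rw [this, ← he]
    -- find the minimizer of f over the cycle of p
    obtain ⟨k₀, hk₀q, hk₀min⟩ := Finset.exists_min_image (Finset.range q)
      (fun k => f (T^[k] p)) ⟨0, Finset.mem_range.mpr hq⟩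
    set y := T^[k₀] p with hydef
    have hmin : ∀ k, f y ≤ f (T^[k] p) := by
      intro k
      rw [iter_mod T hp k]
      exact hk₀min _ (Finset.mem_range.mpr (Nat.mod_lt _ hq))
    have hyper : T^[q] y = y := by
      rw [hydef, ← Function.iterate_add_apply, Nat.add_comm,
        Function.iterate_add_apply, hp]
    have hyS : y ∈ S := by
      rw [hmem]
      refine ⟨⟨q, hq, hyper⟩, fun k => ?_⟩
      have hky : T^[k] y = T^[k + k₀] p := by
        rw [hydef, ← Function.iterate_add_apply]
      rw [hky]
      exact hmin _
    refine ⟨y, ⟨hyS, k₀ + m, 0, ?_⟩, ?_⟩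
    · simp [hydef, hpdef, Function.iterate_add_apply]
    · rintro z ⟨hzS, a, b, hab⟩
      rw [hmem] at hzS
      obtain ⟨⟨r, hr, hzr⟩, hzmin⟩ := hzS
      -- z is in the forward orbit of x
      obtain ⟨j, hj⟩ := orbit_back T hr hzr b
      have hzx : T^[j + a] x = z := by
        rw [Function.iterate_add_apply, hab, hj]
      -- common point u in both cycles
      set c := max (j + a) m with hcdef
      have hc1 : T^[c] x = T^[c - (j + a)] z := by
        rw [← hzx, ← Function.iterate_add_apply]
        congr 1; omega
      have hc2 : T^[c] x = T^[c - m] p := by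
        rw [hpdef, ← Function.iterate_add_apply]
        congr 1; omega
      -- p is in the orbit of z
      obtain ⟨j', hj'⟩ := orbit_back T hq hp (c - m)
      have hpz : T^[j' + (c - (j + a))] z = p := by
        rw [Function.iterate_add_apply, ← hc1, hc2, hj']
      -- z is in the orbit of p
      obtain ⟨j'', hj''⟩ := orbit_back T hr hzr (c - (j + a))
      have hzp : T^[j'' + (c - m)] p = z := by
        rw [Function.iterate_add_apply, ← hc2, hc1, hj'']
      -- f y ≤ f z and f z ≤ f y
      have h1 : f y ≤ f z := by rw [← hzp]; exact hmin _
      have h2 : f z ≤ f y := by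
        have := hzmin (k₀ + (j' + (c - (j + a))))
        rwa [Function.iterate_add_apply, hpz, ← hydef] at this
      exact hf.injective (le_antisymm h2 h1)
end

section
/- Let X be a Polish space, T : X → X an aperiodic Borel function, f : ℕ → ℕ strictly increasing, and φ : (2^ℕ)^ℕ → X a function such that for all n: (a) if x(m) = y(m) for all m ≥ n then T^{f(n)}(φ(x)) = T^{f(n)}(φ(y)), and (b) if x(m) ≠ y(m) for some m ≥ n then there are no i, j ≤ f(n) with T^i(φ(x)) = T^j(φ(y)). Then the map π : ℕ × (2^ℕ)^ℕ → X defined by π(n, s^n(x)) = T^{f(n)}(φ(x)) (where s is the shift s(x)(m) = x(m+1)) is well-defined and injective. -/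
open Set

/-- Under hypotheses (a) and (b), the map
`π (n, s^n x) = T^{f n} (φ x)` is a well-defined injection of `ℕ × (2^ℕ)^ℕ` into `X`,
where `s` is the unilateral shift (so `s^n x = fun m => x (m + n)`). -/
theorem statement13 {X : Type*} [TopologicalSpace X] [PolishSpace X]
    [MeasurableSpace X] [BorelSpace X]
    (T : X → X) (hT : Measurable T)
    (haper : ∀ (x : X) (m n : ℕ), m < n → T^[m] x ≠ T^[n] x)
    (f : ℕ → ℕ) (hf : StrictMono f)
    (φ : (ℕ → ℕ → Bool) → X)
    (ha : ∀ (n : ℕ) (x y : ℕ → ℕ → Bool), (∀ m ≥ n, x m = y m) →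
      T^[f n] (φ x) = T^[f n] (φ y))
    (hb : ∀ (n : ℕ) (x y : ℕ → ℕ → Bool), (∃ m ≥ n, x m ≠ y m) →
      ∀ i ≤ f n, ∀ j ≤ f n, T^[i] (φ x) ≠ T^[j] (φ y)) :
    ∃ π : ℕ × (ℕ → ℕ → Bool) → X,
      (∀ (n : ℕ) (x : ℕ → ℕ → Bool), π (n, fun m => x (m + n)) = T^[f n] (φ x)) ∧
      Function.Injective π := by
  -- key lemma: comparing values forces equal levels and eventual agreement
  have key : ∀ (n n' : ℕ) (a b : ℕ → ℕ → Bool), n ≤ n' →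
      T^[f n] (φ a) = T^[f n'] (φ b) → n = n' ∧ ∀ m ≥ n', a m = b m := by
    intro n n' a b hnn' heq
    have hagree : ∀ m ≥ n', a m = b m := by
      by_contra hcon
      push_neg at hcon
      obtain ⟨m, hm, hne⟩ := hcon
      exact hb n' a b ⟨m, hm, hne⟩ (f n) (hf.monotone hnn') (f n') le_rfl heq
    refine ⟨?_, hagree⟩
    rcases hnn'.lt_or_eq with hlt | h
    · exfalso
      have hflt : f n < f n' := hf hlt
      set d := f n' - f n with hd
      have hdpos : 0 < d := Nat.sub_pos_of_lt hflt
      have hsum : d + f n = f n' := Nat.sub_add_cancel hflt.le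
      have h1 : T^[f n'] (φ a) = T^[f n'] (φ b) := ha n' a b hagree
      have h2 : T^[f n'] (φ a) = T^[d + f n'] (φ b) := by
        calc T^[f n'] (φ a) = T^[d + f n] (φ a) := by rw [hsum]
        _ = T^[d] (T^[f n] (φ a)) := Function.iterate_add_apply T d (f n) (φ a)
        _ = T^[d] (T^[f n'] (φ b)) := by rw [heq]
        _ = T^[d + f n'] (φ b) := (Function.iterate_add_apply T d (f n') (φ b)).symm
      exact haper (φ b) (f n') (d + f n') (Nat.lt_add_of_pos_left hdpos) (h1.symm.trans h2)
    · exact h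
  refine ⟨fun p => T^[f p.1] (φ (fun m => p.2 (m - p.1))), ?_, ?_⟩
  · intro n x
    exact ha n _ x (fun m hm => by simp [Nat.sub_add_cancel hm])
  · rintro ⟨n, y⟩ ⟨n', y'⟩ heq
    simp only at heq
    have hmain : n = n' ∧ ∀ m ≥ n', (fun m => y (m - n)) m = (fun m => y' (m - n')) m := by
      rcases le_total n n' with h | h
      · exact key n n' _ _ h heq
      · obtain ⟨h1, h2⟩ := key n' n _ _ h heq.symm
        exact ⟨h1.symm, fun m hm => by subst h1; exact (h2 m hm).symm⟩
    obtain ⟨h1, h2⟩ := hmain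
    subst h1
    have : y = y' := by
      funext k
      have := h2 (k + n) (Nat.le_add_left n k)
      simpa using this
    rw [this]
end
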